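/- The symmetry map is equivariant under left translations: for all x, y, w ∈ S, x · s_y(x^{-1} · w) = s_{x·y}(w), where · is the group product of S. -/

import Mathlib

noncomputable section

/-- `V n` : the symplectic vector space `ℝ^{2n}` presented as pairs of `n`-vectors. -/
abbrev V (n : ℕ) := (Fin n → ℝ) × (Fin n → ℝ)

/-- The standard symplectic bilinear form `ω⁰` on `ℝ^{2n}`. -/
def omega0 {n : ℕ} (x y : V n) : ℝ := ∑ i, (x.1 i * y.2 i - x.2 i * y.1 i)

/-- The space `S = ℝ × ℝ^{2n} × ℝ` with coordinates `(a, x, z)`. -/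
abbrev S (n : ℕ) := ℝ × V n × ℝ

/-- The geodesic symmetry `s_{(a,x,z)}(a',x',z')`. -/
def sym {n : ℕ} (p q : S n) : S n :=
  (2 * p.1 - q.1,
   (2 * Real.cosh (p.1 - q.1)) • p.2.1 - q.2.1,
   2 * Real.cosh (2 * (p.1 - q.1)) * p.2.2
     + omega0 p.2.1 q.2.1 * Real.sinh (p.1 - q.1) - q.2.2)

/-- The group law `L_{(a,x,z)}(a',x',z')` on `S`. -/
def Smul {n : ℕ} (p q : S n) : S n :=
  (p.1 + q.1,
   Real.exp (-q.1) • p.2.1 + q.2.1,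
   Real.exp (-2 * q.1) * p.2.2 + q.2.2 + (1/2) * omega0 p.2.1 q.2.1 * Real.exp (-q.1))

/-- The group inverse on `S`. -/
def Sinv {n : ℕ} (p : S n) : S n :=
  (-p.1, -(Real.exp p.1) • p.2.1, -(Real.exp (2 * p.1) * p.2.2))

/-! Write `x = (a, u, z)`, `y = (b, v, t)`, `w = (c, r, s)`. Left translation adds `a` to the first
coordinate, so on both sides every `cosh` and `sinh` is evaluated at (a multiple of) `a + b - c`.
Once `ω⁰` is expanded by bilinearity and antisymmetry, each coordinate of the claim is an identity
between Laurent polynomials in `e^a, e^b, e^c`. -/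

open Real

section Omega

variable {n : ℕ}

def omega0Form : LinearMap.BilinForm ℝ (V n) :=
  LinearMap.mk₂ ℝ omega0
    (fun u v w => by
      simp only [omega0, Prod.fst_add, Prod.snd_add, Pi.add_apply, ← Finset.sum_add_distrib]
      congr! 1; ring)
    (fun c u w => by
      simp only [omega0, Prod.smul_fst, Prod.smul_snd, Pi.smul_apply, smul_eq_mul, Finset.mul_sum]
      congr! 1; ring)
    (fun u v w => by
      simp only [omega0, Prod.fst_add, Prod.snd_add, Pi.add_apply, ← Finset.sum_add_distrib]
      congr! 1; ring)
    (fun c u w => by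
      simp only [omega0, Prod.smul_fst, Prod.smul_snd, Pi.smul_apply, smul_eq_mul, Finset.mul_sum]
      congr! 1; ring)

lemma omega0_add_left (u v w : V n) : omega0 (u + v) w = omega0 u w + omega0 v w :=
  omega0Form.map_add₂ u v w

lemma omega0_smul_left (c : ℝ) (u w : V n) : omega0 (c • u) w = c * omega0 u w :=
  omega0Form.map_smul₂ c u w

lemma omega0_add_right (u v w : V n) : omega0 w (u + v) = omega0 w u + omega0 w v :=
  map_add (omega0Form w) u v

lemma omega0_sub_right (u v w : V n) : omega0 w (u - v) = omega0 w u - omega0 w v :=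
  map_sub (omega0Form w) u v

lemma omega0_smul_right (c : ℝ) (u w : V n) : omega0 w (c • u) = c * omega0 w u :=
  map_smul (omega0Form w) c u

lemma omega0_swap (u v : V n) : omega0 v u = -omega0 u v := by
  simp only [omega0, ← Finset.sum_neg_distrib]; congr! 1; ring

lemma omega0_self (u : V n) : omega0 u u = 0 := by
  linarith [omega0_swap u u]

end Omega

/-- equivariance of the symmetries under left translations:
`x · s_y(x⁻¹ · w) = s_{x·y}(w)`. -/
theorem sym_equivariant (n : ℕ) (x y w : S n) :
    Smul x (sym y (Smul (Sinv x) w)) = sym (Smul x y) w := by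
  obtain ⟨a, u, z⟩ := x
  obtain ⟨b, v, t⟩ := y
  obtain ⟨c, r, s⟩ := w
  simp only [Smul, sym, Sinv, Prod.mk.injEq]
  rw [show b - (-a + c) = a + b - c by ring]
  refine ⟨by ring, ?_, ?_⟩
  · have h : exp (-(2 * b - (-a + c))) + exp (-c) * exp a = 2 * cosh (a + b - c) * exp (-b) := by
      simp only [cosh_eq, exp_add, exp_sub, exp_neg, two_mul]
      field_simp
      ring
    linear_combination (norm := module) h • u
  · simp only [omega0_add_left, omega0_add_right, omega0_smul_left, omega0_smul_right,
      omega0_sub_right, omega0_self, omega0_swap u v]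
    simp only [cosh_eq, sinh_eq, exp_add, exp_sub, exp_neg, two_mul, neg_mul, neg_add, neg_sub]
    field_simp
    ring
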